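/- Let ⟨·,·⟩ be the symmetric bilinear form on ℝ⁵ with orthogonal basis (L, E₁, E₂, E₃, E₄) satisfying ⟨L,L⟩ = 1 and ⟨E_i,E_i⟩ = −1 for i = 1, …, 4. Set L_i = L − E_i, D = 2L − E₁ − E₂ − E₃ − E₄, and D_i = D + E_i, and let Nef = cone({L, L₁, L₂, L₃, L₄, D, D₁, D₂, D₃, D₄}). Then: (a) {A ∈ Nef : ⟨A, D⟩ ≤ ⟨A, L_i⟩ for all i = 1, …, 4} = cone({D, D + L} ∪ {D_i : i = 1,…,4} ∪ {D + L_i : i = 1,…,4}); and (b) for each i, {A ∈ Nef : ⟨A, L_i⟩ ≤ ⟨A, D⟩ and ⟨A, L_i⟩ ≤ ⟨A, L_j⟩ for all j ≠ i} = cone({L, D + L, L_i, D + L_i} ∪ {L_i + L_j : j ≠ i} ∪ {D_j : j ≠ i}). -/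

import Mathlib

/-- The convex cone generated by a set `s`: all finite nonnegative real linear
combinations of elements of `s`. -/
def coneHull {E : Type*} [AddCommMonoid E] [Module ℝ E] (s : Set E) : Set E :=
  {x | ∃ (n : ℕ) (c : Fin n → ℝ) (g : Fin n → E),
    (∀ i, 0 ≤ c i) ∧ (∀ i, g i ∈ s) ∧ x = ∑ i, c i • g i}

/-- The intersection form on `ℝ⁵` for which the ordered basis `(L, E₁, E₂, E₃, E₄)` is
orthogonal with `⟨L,L⟩ = 1` and `⟨Eᵢ,Eᵢ⟩ = −1`. -/
def interForm16 (x y : Fin 5 → ℝ) : ℝ :=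
  x 0 * y 0 - x 1 * y 1 - x 2 * y 2 - x 3 * y 3 - x 4 * y 4

/-- The class `L` (pullback of a line). -/
def Lcl : Fin 5 → ℝ := ![1, 0, 0, 0, 0]

/-- The exceptional classes `E₁, …, E₄`. -/
def Ecl (i : Fin 4) : Fin 5 → ℝ := Pi.single i.succ 1

/-- The classes `Lᵢ = L − Eᵢ`. -/
def Licl (i : Fin 4) : Fin 5 → ℝ := Lcl - Ecl i

/-- The class `D = 2L − E₁ − E₂ − E₃ − E₄`. -/
def Dcl : Fin 5 → ℝ := (2 : ℝ) • Lcl - ∑ i, Ecl i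

/-- The classes `Dᵢ = D + Eᵢ`. -/
def Dicl (i : Fin 4) : Fin 5 → ℝ := Dcl + Ecl i

/-- The nef cone: the cone generated by `L`, the `Lᵢ`, `D` and the `Dᵢ`. -/
def nefCone16 : Set (Fin 5 → ℝ) :=
  coneHull ({Lcl, Dcl} ∪ Set.range Licl ∪ Set.range Dicl)

/-!
Write a class as `A = d L - ∑ mⱼ Eⱼ` with `d = ⟨A, L⟩` and `mⱼ = ⟨A, Eⱼ⟩`. A nef class meets the
(−1)-curves `Eⱼ` and `L - Eⱼ - Eₖ` nonnegatively, so `0 ≤ mⱼ` and `mⱼ + mₖ ≤ d`; moreover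
`⟨A, Lᵢ⟩ = d - mᵢ` and `⟨A, D⟩ = 2d - ∑ mⱼ`, so both subcones are cut out by comparisons of the
multiplicities. After ordering the multiplicities decreasingly (with `mᵢ` first in (b)), `A` is
written explicitly as a nonnegative combination of the proposed generators; for (b) the ordered
region is split into five pieces, each with its own combination. Conversely both subcones are
pointed cones (the nef cone cut with a dual cone), so it suffices to check the generators.
-/

open PointedCone

theorem coneHull_eq_hull {E : Type*} [AddCommMonoid E] [Module ℝ E] (s : Set E) :
    coneHull s = hull ℝ s := by
  ext x
  rw [SetLike.mem_coe, Submodule.mem_span_set']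
  constructor
  · rintro ⟨n, c, g, hc, hg, rfl⟩
    exact ⟨n, fun i => ⟨c i, hc i⟩, fun i => ⟨g i, hg i⟩, rfl⟩
  · rintro ⟨n, c, g, rfl⟩
    exact ⟨n, fun i => c i, fun i => g i, fun i => (c i).2, fun i => (g i).2, rfl⟩

theorem exists_perm_zero_eq_antitone_comp {n : ℕ} {α : Type*} [LinearOrder α]
    (f : Fin (n + 1) → α) {i : Fin (n + 1)} (hi : ∀ j, f j ≤ f i) :
    ∃ σ : Equiv.Perm (Fin (n + 1)), σ 0 = i ∧ Antitone (f ∘ σ) := by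
  set τ := Tuple.sort (OrderDual.toDual ∘ f)
  have hτ : Antitone (f ∘ τ) := Tuple.monotone_sort (OrderDual.toDual ∘ f)
  have hmax : f (τ 0) = f i := by
    obtain ⟨k, rfl⟩ := τ.surjective i
    exact le_antisymm (hi _) (hτ (Fin.zero_le k))
  refine ⟨Equiv.swap (τ 0) i * τ, by simp, ?_⟩
  have hcomp : f ∘ (Equiv.swap (τ 0) i * τ) = f ∘ τ := by
    funext k
    simp only [Function.comp_apply, Equiv.Perm.coe_mul, Equiv.swap_apply_def]
    split_ifs <;> simp_all
  rwa [hcomp]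

theorem sum_univ_four_eq_perm {M : Type*} [AddCommMonoid M] (σ : Equiv.Perm (Fin 4))
    (f : Fin 4 → M) : ∑ j, f j = f (σ 0) + f (σ 1) + f (σ 2) + f (σ 3) := by
  rw [← Equiv.sum_comp σ, Fin.sum_univ_four]

def intersectionForm : (Fin 5 → ℝ) →ₗ[ℝ] (Fin 5 → ℝ) →ₗ[ℝ] ℝ :=
  LinearMap.mk₂ ℝ interForm16
    (fun _ _ _ => by simp only [interForm16, Pi.add_apply]; ring)
    (fun _ _ _ => by simp only [interForm16, Pi.smul_apply, smul_eq_mul]; ring)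
    (fun _ _ _ => by simp only [interForm16, Pi.add_apply]; ring)
    (fun _ _ _ => by simp only [interForm16, Pi.smul_apply, smul_eq_mul]; ring)

local notation "⟪" x ", " y "⟫" => intersectionForm x y

theorem interForm16_eq (x y : Fin 5 → ℝ) : interForm16 x y = ⟪x, y⟫ := rfl

@[simp] theorem intersectionForm_Lcl_Lcl : ⟪Lcl, Lcl⟫ = 1 := by
  simp [intersectionForm, interForm16, Lcl]

@[simp] theorem intersectionForm_Lcl_Ecl (j : Fin 4) : ⟪Lcl, Ecl j⟫ = 0 := by
  simp [intersectionForm, interForm16, Lcl, Ecl]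

@[simp] theorem intersectionForm_Ecl_Lcl (j : Fin 4) : ⟪Ecl j, Lcl⟫ = 0 := by
  simp [intersectionForm, interForm16, Lcl, Ecl]

@[simp] theorem intersectionForm_Ecl_Ecl (i j : Fin 4) :
    ⟪Ecl i, Ecl j⟫ = if i = j then -1 else 0 := by
  fin_cases i <;> fin_cases j <;> simp [intersectionForm, interForm16, Ecl]

theorem eq_smul_Lcl_sub_sum (A : Fin 5 → ℝ) :
    A = ⟪A, Lcl⟫ • Lcl - ∑ j, ⟪A, Ecl j⟫ • Ecl j := by
  ext k
  fin_cases k <;> simp [intersectionForm, interForm16, Lcl, Ecl, Fin.sum_univ_four]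

theorem intersectionForm_Dcl (A : Fin 5 → ℝ) :
    ⟪A, Dcl⟫ = 2 * ⟪A, Lcl⟫ - ∑ j, ⟪A, Ecl j⟫ := by
  simp [Dcl]

theorem intersectionForm_Licl (A : Fin 5 → ℝ) (i : Fin 4) :
    ⟪A, Licl i⟫ = ⟪A, Lcl⟫ - ⟪A, Ecl i⟫ := by
  simp [Licl]

/-- The exceptional curves `Eⱼ` and the strict transforms `L - Eⱼ - Eₖ` of the lines through two
of the blown-up points. -/
def minusOneCurves : Set (Fin 5 → ℝ) :=
  Set.range Ecl ∪ {c | ∃ j k, j ≠ k ∧ c = Lcl - Ecl j - Ecl k}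

theorem nefCone16_eq_hull :
    nefCone16 = hull ℝ ({Lcl, Dcl} ∪ Set.range Licl ∪ Set.range Dicl) :=
  coneHull_eq_hull _

theorem hull_subset_nefCone16 {s : Set (Fin 5 → ℝ)} (hs : s ⊆ nefCone16) :
    (hull ℝ s : Set (Fin 5 → ℝ)) ⊆ nefCone16 := by
  rw [nefCone16_eq_hull] at hs ⊢
  exact Submodule.span_le.mpr hs

theorem nefCone16_subset_dual : nefCone16 ⊆ dual intersectionForm.flip minusOneCurves := by
  rw [nefCone16_eq_hull]
  refine Submodule.span_le.mpr ?_
  rintro g (((rfl | rfl) | ⟨m, rfl⟩) | ⟨m, rfl⟩) c (⟨j, rfl⟩ | ⟨j, k, hjk, rfl⟩) <;>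
    simp [Dcl, Licl, Dicl] <;> grind

theorem intersectionForm_Ecl_nonneg {A : Fin 5 → ℝ} (hA : A ∈ nefCone16) (j : Fin 4) :
    0 ≤ ⟪A, Ecl j⟫ :=
  nefCone16_subset_dual hA (Or.inl ⟨j, rfl⟩)

theorem intersectionForm_Ecl_add_le {A : Fin 5 → ℝ} (hA : A ∈ nefCone16) {j k : Fin 4}
    (hjk : j ≠ k) : ⟪A, Ecl j⟫ + ⟪A, Ecl k⟫ ≤ ⟪A, Lcl⟫ := by
  have := nefCone16_subset_dual hA (Or.inr ⟨j, k, hjk, rfl⟩)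
  simp only [map_sub, LinearMap.sub_apply, LinearMap.flip_apply, sub_nonneg] at this
  linarith

def generatorsB : Set (Fin 5 → ℝ) :=
  {Dcl, Dcl + Lcl} ∪ Set.range Dicl ∪ Set.range (fun i => Dcl + Licl i)

def generatorsBi (i : Fin 4) : Set (Fin 5 → ℝ) :=
  {Lcl, Dcl + Lcl, Licl i, Dcl + Licl i} ∪ (fun j => Licl i + Licl j) '' {j | j ≠ i} ∪
    Dicl '' {j | j ≠ i}

theorem generatorsB_subset_nefCone16 : generatorsB ⊆ nefCone16 := by
  rw [nefCone16_eq_hull]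
  rintro g (((rfl | rfl) | ⟨m, rfl⟩) | ⟨m, rfl⟩)
  · exact subset_hull (by simp)
  · exact add_mem (subset_hull (by simp)) (subset_hull (by simp))
  · exact subset_hull (by simp)
  · exact add_mem (subset_hull (by simp)) (subset_hull (by simp))

theorem generatorsBi_subset_nefCone16 (i : Fin 4) : generatorsBi i ⊆ nefCone16 := by
  rw [nefCone16_eq_hull]
  rintro g (((rfl | rfl | rfl | rfl) | ⟨m, -, rfl⟩) | ⟨m, -, rfl⟩)
  · exact subset_hull (by simp)
  · exact add_mem (subset_hull (by simp)) (subset_hull (by simp))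
  · exact subset_hull (by simp)
  · exact add_mem (subset_hull (by simp)) (subset_hull (by simp))
  · exact add_mem (subset_hull (by simp)) (subset_hull (by simp))
  · exact subset_hull (by simp)

theorem generatorsB_subset_dual :
    generatorsB ⊆ dual intersectionForm.flip (Set.range fun i => Licl i - Dcl) := by
  rintro g (((rfl | rfl) | ⟨m, rfl⟩) | ⟨m, rfl⟩) _ ⟨i, rfl⟩ <;>
    simp [Dcl, Licl, Dicl, Finset.sum_add_distrib] <;> grind

theorem generatorsBi_subset_dual (i : Fin 4) :
    generatorsBi i ⊆ dual intersectionForm.flip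
      (insert (Dcl - Licl i) ((fun j => Licl j - Licl i) '' {j | j ≠ i})) := by
  rintro g (((rfl | rfl | rfl | rfl) | ⟨m, hm, rfl⟩) | ⟨m, hm, rfl⟩) _ (rfl | ⟨j, hj, rfl⟩) <;>
    simp [Dcl, Licl, Dicl, Finset.sum_add_distrib] <;> grind

theorem smul_Lcl_sub_sum_mem_hull_generatorsB (d : ℝ) (m : Fin 4 → ℝ)
    (σ : Equiv.Perm (Fin 4)) (hσ : Antitone (m ∘ σ)) (hnef : m (σ 0) + m (σ 1) ≤ d)
    (hD : d ≤ m (σ 1) + m (σ 2) + m (σ 3)) :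
    d • Lcl - ∑ j, m j • Ecl j ∈ hull ℝ generatorsB := by
  have h₀₁ : m (σ 1) ≤ m (σ 0) := hσ (by decide : (0 : Fin 4) ≤ 1)
  have h₁₂ : m (σ 2) ≤ m (σ 1) := hσ (by decide : (1 : Fin 4) ≤ 2)
  have h₁₃ : m (σ 3) ≤ m (σ 1) := hσ (by decide : (1 : Fin 4) ≤ 3)
  have hdecomp : d • Lcl - ∑ j, m j • Ecl j =
      (m (σ 1) + m (σ 2) + m (σ 3) - d) • Dcl + (d - m (σ 0) - m (σ 1)) • (Dcl + Lcl) +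
      (m (σ 0) - m (σ 1)) • (Dcl + Licl (σ 0)) + (m (σ 1) - m (σ 2)) • Dicl (σ 2) +
      (m (σ 1) - m (σ 3)) • Dicl (σ 3) := by
    simp only [Dcl, Dicl, Licl, sum_univ_four_eq_perm σ]
    module
  rw [hdecomp]
  refine add_mem (add_mem (add_mem (add_mem ?_ ?_) ?_) ?_) ?_ <;>
    refine smul_mem _ (by linarith) (subset_hull ?_) <;> simp [generatorsB]

theorem smul_Lcl_sub_sum_mem_hull_generatorsBi_of_eq {d : ℝ} {m : Fin 4 → ℝ}
    {σ : Equiv.Perm (Fin 4)} {a b c e f g h : ℝ} (ha : 0 ≤ a) (hb : 0 ≤ b) (hc : 0 ≤ c)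
    (he : 0 ≤ e) (hf : 0 ≤ f) (hg : 0 ≤ g) (hh : 0 ≤ h)
    (hd : d = a + 3 * b + c + 3 * e + 2 * f + 2 * g + 2 * h)
    (hm₀ : m (σ 0) = b + c + 2 * e + f + g + h) (hm₁ : m (σ 1) = b + e + f + g + h)
    (hm₂ : m (σ 2) = b + e + h) (hm₃ : m (σ 3) = b + e + g) :
    d • Lcl - ∑ j, m j • Ecl j ∈ hull ℝ (generatorsBi (σ 0)) := by
  have hdecomp : d • Lcl - ∑ j, m j • Ecl j =
      a • Lcl + b • (Dcl + Lcl) + c • Licl (σ 0) + e • (Dcl + Licl (σ 0)) +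
      f • (Licl (σ 0) + Licl (σ 1)) + g • Dicl (σ 2) + h • Dicl (σ 3) := by
    simp only [Dcl, Dicl, Licl, sum_univ_four_eq_perm σ]
    rw [hd, hm₀, hm₁, hm₂, hm₃]
    module
  have hne (k : Fin 4) (hk : k ≠ 0) : σ k ≠ σ 0 := σ.injective.ne hk
  rw [hdecomp]
  refine add_mem (add_mem (add_mem (add_mem (add_mem (add_mem ?_ ?_) ?_) ?_) ?_) ?_) ?_ <;>
    refine smul_mem _ ‹_› (subset_hull ?_)
  iterate 4 simp [generatorsBi]
  · exact Or.inl (Or.inr ⟨σ 1, hne 1 (by decide), rfl⟩)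
  · exact Or.inr ⟨σ 2, hne 2 (by decide), rfl⟩
  · exact Or.inr ⟨σ 3, hne 3 (by decide), rfl⟩

theorem smul_Lcl_sub_sum_mem_hull_generatorsBi (d : ℝ) (m : Fin 4 → ℝ)
    (σ : Equiv.Perm (Fin 4)) (hσ : Antitone (m ∘ σ)) (hm₃ : 0 ≤ m (σ 3))
    (hnef : m (σ 0) + m (σ 1) ≤ d) (hD : m (σ 1) + m (σ 2) + m (σ 3) ≤ d) :
    d • Lcl - ∑ j, m j • Ecl j ∈ hull ℝ (generatorsBi (σ 0)) := by
  have h₀₁ : m (σ 1) ≤ m (σ 0) := hσ (by decide : (0 : Fin 4) ≤ 1)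
  have h₁₂ : m (σ 2) ≤ m (σ 1) := hσ (by decide : (1 : Fin 4) ≤ 2)
  have h₂₃ : m (σ 3) ≤ m (σ 2) := hσ (by decide : (2 : Fin 4) ≤ 3)
  set mi := m (σ 0)
  set mp := m (σ 1)
  set mq := m (σ 2)
  set mr := m (σ 3)
  rcases le_total mp (mq + mr) with hpqr | hpqr
  · rcases le_total (mi + mq + mr) d with hd | hd
    · apply smul_Lcl_sub_sum_mem_hull_generatorsBi_of_eq (a := d - mi - mq - mr)
        (b := mq + mr - mp) (c := mi - mp) (e := 0) (f := 0) (g := mp - mq) (h := mp - mr) <;>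
        linarith
    · apply smul_Lcl_sub_sum_mem_hull_generatorsBi_of_eq (a := 0) (b := d - mi - mp)
        (c := d - mp - mq - mr) (e := mi + mq + mr - d) (f := 0) (g := mp - mq)
        (h := mp - mr) <;> linarith
  · rcases le_total (2 * mp + mr) d with hd | hd
    · rcases le_total (mi + mp + mr) d with hd' | hd'
      · apply smul_Lcl_sub_sum_mem_hull_generatorsBi_of_eq (a := d - mi - mp - mr) (b := mr)
          (c := mi - mp) (e := 0) (f := mp - mq) (g := 0) (h := mq - mr) <;> linarith
      · apply smul_Lcl_sub_sum_mem_hull_generatorsBi_of_eq (a := 0) (b := d - mi - mp)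
          (c := d - 2 * mp - mr) (e := mi + mp + mr - d) (f := mp - mq) (g := 0)
          (h := mq - mr) <;> linarith
    · apply smul_Lcl_sub_sum_mem_hull_generatorsBi_of_eq (a := 0) (b := d - mi - mp) (c := 0)
        (e := mi - mp) (f := d - mp - mq - mr) (g := 2 * mp + mr - d) (h := 2 * mp + mq - d) <;>
        linarith

theorem subconeB_eq :
    {A ∈ nefCone16 | ∀ i : Fin 4, interForm16 A Dcl ≤ interForm16 A (Licl i)} =
      coneHull generatorsB := by
  rw [coneHull_eq_hull]
  apply Set.Subset.antisymm
  · rintro A ⟨hnef, hA⟩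
    obtain ⟨i, hi⟩ := Finite.exists_max fun j => ⟪A, Ecl j⟫
    obtain ⟨σ, -, hσ⟩ := exists_perm_zero_eq_antitone_comp _ hi
    have hσ₀ := hA (σ 0)
    rw [interForm16_eq, interForm16_eq, intersectionForm_Dcl, intersectionForm_Licl,
      sum_univ_four_eq_perm σ] at hσ₀
    rw [eq_smul_Lcl_sub_sum A]
    exact smul_Lcl_sub_sum_mem_hull_generatorsB _ _ σ hσ
      (intersectionForm_Ecl_add_le hnef (σ.injective.ne (by decide))) (by linarith)
  · intro A hA
    have hdual := Submodule.span_le.mpr generatorsB_subset_dual hA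
    refine ⟨hull_subset_nefCone16 generatorsB_subset_nefCone16 hA, fun i => ?_⟩
    simpa [interForm16_eq, sub_nonneg] using hdual ⟨i, rfl⟩

theorem subconeBi_eq (i : Fin 4) :
    {A ∈ nefCone16 |
        interForm16 A (Licl i) ≤ interForm16 A Dcl ∧
        ∀ j : Fin 4, j ≠ i → interForm16 A (Licl i) ≤ interForm16 A (Licl j)} =
      coneHull (generatorsBi i) := by
  rw [coneHull_eq_hull]
  apply Set.Subset.antisymm
  · rintro A ⟨hnef, hD, hL⟩
    simp only [interForm16_eq, intersectionForm_Dcl, intersectionForm_Licl] at hD hL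
    have hi : ∀ j, ⟪A, Ecl j⟫ ≤ ⟪A, Ecl i⟫ := fun j => by
      rcases eq_or_ne j i with rfl | hj
      · exact le_rfl
      · linarith [hL j hj]
    obtain ⟨σ, rfl, hσ⟩ := exists_perm_zero_eq_antitone_comp _ hi
    rw [sum_univ_four_eq_perm σ] at hD
    rw [eq_smul_Lcl_sub_sum A]
    exact smul_Lcl_sub_sum_mem_hull_generatorsBi _ _ σ hσ (intersectionForm_Ecl_nonneg hnef _)
      (intersectionForm_Ecl_add_le hnef (σ.injective.ne (by decide))) (by linarith)
  · intro A hA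
    have hdual := Submodule.span_le.mpr (generatorsBi_subset_dual i) hA
    refine ⟨hull_subset_nefCone16 (generatorsBi_subset_nefCone16 i) hA, ?_, fun j hj => ?_⟩
    · simpa [interForm16_eq, sub_nonneg] using hdual (Set.mem_insert _ _)
    · simpa [interForm16_eq, sub_nonneg] using hdual (Set.mem_insert_of_mem _ ⟨j, hj, rfl⟩)

/-- (a) The subcone of nef classes `A` with `⟨A,D⟩ ≤ ⟨A,Lᵢ⟩` for all `i`
is generated by `D`, `D + L`, the `Dᵢ` and the `D + Lᵢ`; (b) for each `i`, the subcone of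
nef classes `A` with `⟨A,Lᵢ⟩ ≤ ⟨A,D⟩` and `⟨A,Lᵢ⟩ ≤ ⟨A,Lⱼ⟩` for `j ≠ i` is generated by
`L`, `D + L`, `Lᵢ`, `D + Lᵢ`, the `Lᵢ + Lⱼ` for `j ≠ i`, and the `Dⱼ` for `j ≠ i`. -/
theorem statement16 :
    ({A ∈ nefCone16 | ∀ i : Fin 4, interForm16 A Dcl ≤ interForm16 A (Licl i)} =
      coneHull ({Dcl, Dcl + Lcl} ∪ Set.range Dicl ∪
        Set.range (fun i => Dcl + Licl i))) ∧
    (∀ i : Fin 4,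
      {A ∈ nefCone16 |
          interForm16 A (Licl i) ≤ interForm16 A Dcl ∧
          ∀ j : Fin 4, j ≠ i → interForm16 A (Licl i) ≤ interForm16 A (Licl j)} =
        coneHull ({Lcl, Dcl + Lcl, Licl i, Dcl + Licl i} ∪
          (fun j => Licl i + Licl j) '' {j : Fin 4 | j ≠ i} ∪
          Dicl '' {j : Fin 4 | j ≠ i})) :=
  ⟨subconeB_eq, subconeBi_eq⟩
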